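/- arXiv:1905.10434 — 8 statements merged into one kernel-verified Lean document; each statement's English description precedes it below -/
import Mathlib

section
/- For all bit-vectors x and s of width n, the equation (x AND s) = t has a solution x if and only if (t AND s) = t. -/
theorem ic_and_eq (n : ℕ) (s t : BitVec n) :
    (∃ x : BitVec n, x &&& s = t) ↔ t &&& s = t := by
  constructor
  · rintro ⟨x, rfl⟩
    ext i
    simp [Bool.and_assoc]
  · intro h
    exact ⟨t, h⟩
end

section
/- For all bit-vectors s and t of width n, the disequation (x AND s) ≠ t has a solution x if and only if t ≠ 0 or s ≠ 0. -/
theorem ic_and_ne (n : ℕ) (s t : BitVec n) :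
    (∃ x : BitVec n, x &&& s ≠ t) ↔ (t ≠ 0 ∨ s ≠ 0) := by
  constructor
  · rintro ⟨x, hx⟩
    by_contra h
    push_neg at h
    obtain ⟨ht, hs⟩ := h
    subst ht hs
    simp at hx
  · rintro (ht | hs)
    · exact ⟨0, by simpa using ht.symm⟩
    · rcases eq_or_ne t 0 with rfl | ht
      · exact ⟨s, by simpa using hs⟩
      · exact ⟨0, by simpa using ht.symm⟩
end

section
/- For all bit-vectors s and t of width n, there exists x such that (x OR s) ≤ᵤ t (unsigned comparison) if and only if s ≤ᵤ t; moreover s itself is such an x, i.e., if s ≤ᵤ t then (s OR s) ≤ᵤ t. -/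
theorem ic_or_ule (n : ℕ) (s t : BitVec n) :
    ((∃ x : BitVec n, (x ||| s).toNat ≤ t.toNat) ↔ s.toNat ≤ t.toNat) ∧
    (s.toNat ≤ t.toNat → (s ||| s).toNat ≤ t.toNat) := by
  constructor
  · constructor
    · rintro ⟨x, hx⟩
      calc s.toNat ≤ (x ||| s).toNat := by
            rw [BitVec.toNat_or]
            exact Nat.le_of_testBit (fun i hi => by
              simp [Nat.testBit_or, hi])
        _ ≤ t.toNat := hx
    · intro h
      exact ⟨s, by simpa using h⟩
  · intro h; simpa using h
end

section
/- For all width-k bit-vectors s and t, if there exists x with toNat(x · s) mod 2^k unsigned-less-than toNat t, then x = 0 witnesses it; equivalently, the invertibility condition for x·s <ᵤ t is t ≠ 0, and conversely if t ≠ 0 then 0 · s <ᵤ t. -/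
theorem ic_mul_ult (k : ℕ) (s t : BitVec k) :
    ((∃ x : BitVec k, x * s < t) ↔ t ≠ 0) ∧
    (t ≠ 0 → (0 : BitVec k) * s < t) := by
  have h0 : ∀ h : t ≠ 0, (0 : BitVec k) * s < t := by
    intro h
    simp only [BitVec.lt_def, BitVec.zero_mul]; simp
    exact Nat.pos_of_ne_zero (by simpa [BitVec.toNat_eq] using h)
  constructor
  · constructor
    · rintro ⟨x, hx⟩ rfl
      simp [BitVec.lt_def] at hx
    · intro h; exact ⟨0, h0 h⟩
  · exact h0
end

section
/- For all width-k bit-vectors s and t, the literal (s udiv x) = t has the conditional inverse x = s udiv t: if there exists x with s udiv x = t, then s udiv (s udiv t) = t. -/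
def smtUdiv {k : ℕ} (s x : BitVec k) : BitVec k :=
  if x = 0 then BitVec.allOnes k else s / x

/-!
For fixed `s`, the map `f x = smtUdiv s x` is antitone for the unsigned order and satisfies
`x ≤ f (f x)`: for `x ≠ 0` with `s / x ≠ 0` this is `x * (s / x) ≤ s`, and otherwise `f` sends a
zero argument to the top element `allOnes`. Such a map is an antitone Galois connection, so
`f ∘ f ∘ f = f`: applying `f` to `x ≤ f (f x)` gives `f (f (f x)) ≤ f x`, and the same inequality
at `f x` gives the reverse. Hence every `t` in the range of `f` satisfies `f (f t) = t`.
-/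

theorem BitVec.le_allOnes {k : ℕ} (x : BitVec k) : x ≤ BitVec.allOnes k := by
  rw [BitVec.le_def, BitVec.toNat_allOnes]
  have := x.isLt
  omega

section

variable {k : ℕ}

theorem smtUdiv_zero (s : BitVec k) : smtUdiv s 0 = BitVec.allOnes k := if_pos rfl

theorem smtUdiv_of_ne_zero (s : BitVec k) {x : BitVec k} (hx : x ≠ 0) : smtUdiv s x = s / x :=
  if_neg hx

theorem smtUdiv_le_smtUdiv (s : BitVec k) {x y : BitVec k} (hxy : x ≤ y) :
    smtUdiv s y ≤ smtUdiv s x := by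
  by_cases hx : x = 0
  · rw [hx, smtUdiv_zero]
    exact BitVec.le_allOnes _
  have hy : y ≠ 0 := by
    rintro rfl
    exact hx (BitVec.le_zero_iff.1 hxy)
  rw [smtUdiv_of_ne_zero s hx, smtUdiv_of_ne_zero s hy, BitVec.le_def, BitVec.toNat_udiv,
    BitVec.toNat_udiv]
  exact Nat.div_le_div_left (BitVec.le_def.1 hxy) (Nat.pos_of_ne_zero (BitVec.toNat_ne.1 hx))

theorem le_smtUdiv_smtUdiv (s x : BitVec k) : x ≤ smtUdiv s (smtUdiv s x) := by
  by_cases hx : x = 0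
  · rw [hx, BitVec.le_def, BitVec.ofNat_eq_ofNat, BitVec.toNat_zero]
    exact Nat.zero_le _
  rw [smtUdiv_of_ne_zero s hx]
  by_cases hq : s / x = 0
  · rw [hq, smtUdiv_zero]
    exact BitVec.le_allOnes x
  have hq_pos : 0 < s.toNat / x.toNat := by
    rw [← BitVec.toNat_udiv]
    exact Nat.pos_of_ne_zero (BitVec.toNat_ne.1 hq)
  rw [smtUdiv_of_ne_zero s hq, BitVec.le_def, BitVec.toNat_udiv, BitVec.toNat_udiv]
  exact (Nat.le_div_iff_mul_le hq_pos).2 (Nat.mul_div_le s.toNat x.toNat)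

end

theorem udiv_conditional_inverse (k : ℕ) (s t : BitVec k)
    (h : ∃ x : BitVec k, smtUdiv s x = t) :
    smtUdiv s (smtUdiv s t) = t := by
  obtain ⟨x, rfl⟩ := h
  exact BitVec.le_antisymm (smtUdiv_le_smtUdiv s (le_smtUdiv_smtUdiv s x))
    (le_smtUdiv_smtUdiv s (smtUdiv s x))
end

section
/- For all width-k bit-vectors s and t, the literal (x urem s) = t has the conditional inverse x = t: if there exists x with x urem s = t, then t urem s = t. -/
theorem urem_conditional_inverse (k : ℕ) (s t : BitVec k)
    (h : ∃ x : BitVec k, x % s = t) : t % s = t := by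
  obtain ⟨x, rfl⟩ := h
  apply BitVec.eq_of_toNat_eq
  simp [BitVec.toNat_umod, Nat.mod_mod_of_dvd]
end

section
/- For all width-k bit-vectors s, t with unsigned comparisons, there exists x with (s urem x) <ᵤ t if and only if t ≠ 0 (when t ≠ 0, x = s is such a solution, since s urem s = 0 <ᵤ t); that is, the invertibility condition for (s urem x) <ᵤ t is t ≠ 0. -/
theorem ic_urem_ult (k : ℕ) (s t : BitVec k) :
    ((∃ x : BitVec k, s % x < t) ↔ t ≠ 0) ∧
    (t ≠ 0 → s % s < t) := by
  have hss : s % s = 0 := by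
    apply BitVec.eq_of_toNat_eq
    simp [BitVec.toNat_umod]
  have hpos : t ≠ 0 → (0 : BitVec k) < t := by
    intro h
    have : t.toNat ≠ 0 := fun hc => h (by apply BitVec.eq_of_toNat_eq; simp [hc])
    simp only [BitVec.lt_def, show ((0:BitVec k)).toNat = 0 by simp]
    omega
  refine ⟨⟨fun ⟨x, hx⟩ => ?_, fun h => ⟨s, hss ▸ hpos h⟩⟩, fun h => hss ▸ hpos h⟩
  rintro rfl
  exact absurd hx (by simp [BitVec.lt_def])
end

section
/- For all width-k bit-vectors s and t, for the literal (x << s) = t (left shift), x = (t >>ᵤ s) is a conditional inverse: if ∃x. (x << s) = t then ((t >>ᵤ s) << s) = t. -/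
theorem shl_conditional_inverse (k : ℕ) (hk : 1 ≤ k) (s t : BitVec k)
    (h : ∃ x : BitVec k, x <<< s = t) :
    (t >>> s) <<< s = t := by
  obtain ⟨x, rfl⟩ := h
  ext i
  simp [BitVec.getLsbD_shiftLeft, BitVec.getLsbD_ushiftRight]
  by_cases hi : s.toNat ≤ i
  · simp [hi, Nat.sub_add_cancel hi, show ¬ (i < s.toNat) by omega,
      show i - s.toNat < k by omega, show i < k by omega]
  · simp [show i < s.toNat by omega]
end
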